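/- Let 0 < L < R be reals with 2*(R - L)^2 != R^2, and let K, J be reals. Then the asymmetric second-twist expression tau2a(L, R0, R1, K0, K1, J0, J1) (defined in the context, with k = 0) evaluated at R0 = R1 = R, K0 = K1 = K, J0 = J1 = J equals 3*(7R^2 - 8RL + 2L^2)/(128*R^2*(R - L)*sqrt(L*(2R - L))) - L*(27R^2 - 40RL + 10L^2)*K/(192*R*(R - L)*(2R - L)*sqrt(L*(2R - L))) + L^2*(31R^2 - 36RL + 6L^2)*K^2/(384*(R - L)*(2R - L)^2*sqrt(L*(2R - L))) - L^2*R*J/(96*(2R - L)*sqrt(L*(2R - L))). -/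

import Mathlib

/-- The polynomial `N(L, R0, R1)` from the asymmetric second twist coefficient formula. -/
def Npoly (L R0 R1 : ℝ) : ℝ :=
  8 * L ^ 4 * (R0 ^ 2 + R1 ^ 2)
    - 16 * L ^ 3 * (R0 ^ 3 + 2 * R0 ^ 2 * R1 + 2 * R0 * R1 ^ 2 + R1 ^ 3)
    + 8 * L ^ 2 * (R0 + R1) ^ 2 * (R0 ^ 2 + 4 * R0 * R1 + R1 ^ 2)
    - 8 * L * R0 * R1 * (2 * R0 ^ 3 + 7 * R0 ^ 2 * R1 + 7 * R0 * R1 ^ 2 + 2 * R1 ^ 3)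
    + 7 * R0 ^ 2 * R1 ^ 2 * (R0 + R1) ^ 2

/-- The polynomial `P(L, R0, R1)` from the asymmetric second twist coefficient formula. -/
def Ppoly (L R0 R1 : ℝ) : ℝ :=
  L ^ 2 * (R1 - L) ^ 4 * (48 * R0 ^ 3 * (R1 - 2 * L) + 24 * L ^ 2 * (R1 - L) ^ 2
    - 72 * L * R0 * (R1 - L) * (R1 - 2 * L)
    + R0 ^ 2 * (216 * L ^ 2 - 216 * R1 * L + 31 * R1 ^ 2))

/-- The polynomial `Q(L, R0, R1)` from the asymmetric second twist coefficient formula. -/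
def Qpoly (L R0 R1 : ℝ) : ℝ :=
  -(L ^ 2) * R0 * R1 * (32 * L ^ 2 + 17 * R0 * R1 - 32 * L * (R0 + R1))

/-- The polynomial `S(L, R0, R1)` from the asymmetric second twist coefficient formula. -/
def Spoly (L R0 R1 : ℝ) : ℝ :=
  L * (R1 - L) ^ 2 * (40 * (R1 - L) ^ 2 * L ^ 2 + 3 * R0 ^ 3 * (9 * R1 - 16 * L)
    - 80 * R0 * (2 * L ^ 2 - 3 * R1 * L + R1 ^ 2) * L
    + 3 * R0 ^ 2 * (56 * L ^ 2 - 56 * R1 * L + 9 * R1 ^ 2))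

/-- The polynomial `T(L, R0, R1)` from the asymmetric second twist coefficient formula. -/
def Tpoly (L R0 R1 : ℝ) : ℝ := L ^ 2 * R0 * (R1 - L) ^ 2

/-- The asymmetric second twist coefficient `τ₂(F², P)` (case `k = 0`, i.e.
`0 < L < min(R0, R1)`) of the squared billiard map along the elliptic period-2 orbit of
a two-arc billiard table, where `K0, K1` are the second and `J0, J1` the fourth
arclength derivatives of the radii of curvature at the bounce points. -/
noncomputable def tau2a (L R0 R1 K0 K1 J0 J1 : ℝ) : ℝ :=
  (1 / Real.sqrt (L * (R0 - L) * (R1 - L) * (R0 + R1 - L))) *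
    (3 * Npoly L R0 R1
        / (512 * R0 ^ 2 * R1 ^ 2 * (2 * (R0 - L) * (R1 - L) - R0 * R1))
      + (Ppoly L R0 R1 * K0 ^ 2 + Ppoly L R1 R0 * K1 ^ 2)
        / (1536 * (R0 - L) ^ 2 * (R1 - L) ^ 2 * (R0 + R1 - L) ^ 2
            * (2 * (R0 - L) * (R1 - L) - R0 * R1))
      + Qpoly L R0 R1 * K0 * K1
        / (768 * (R0 + R1 - L) ^ 2 * (2 * (R0 - L) * (R1 - L) - R0 * R1))
      - (Spoly L R0 R1 * R1 * K0 + Spoly L R1 R0 * R0 * K1)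
        / (768 * R0 * R1 * (R0 - L) * (R1 - L) * (R0 + R1 - L)
            * (2 * (R0 - L) * (R1 - L) - R0 * R1))
      - (Tpoly L R0 R1 * (R1 - L) * J0 + Tpoly L R1 R0 * (R0 - L) * J1)
        / (192 * (R0 - L) * (R1 - L) * (R0 + R1 - L)))

/-!
On a symmetric table `Δ = (R - L)² · L(2R - L)`, so `√Δ = (R - L) √(L(2R - L))`, and the
resonance factor `Γ = 2(R - L)² - R²` divides, after specialization, each polynomial
coefficient over which it appears (for the `K²` term only the combination `P + Q (R - L)⁴`
of the two contributions). Cancelling `Γ` leaves the symmetric formula.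
-/

section SymmetricTable

variable (L R : ℝ)

theorem sqrt_symmetric_discriminant (hLR : L < R) :
    √(L * (R - L) * (R - L) * (R + R - L)) = (R - L) * √(L * (2 * R - L)) := by
  rw [show L * (R - L) * (R - L) * (R + R - L) = (R - L) ^ 2 * (L * (2 * R - L)) by ring,
    Real.sqrt_mul (sq_nonneg _), Real.sqrt_sq (sub_pos.2 hLR).le]

theorem Npoly_self :
    Npoly L R R = 4 * R ^ 2 * (7 * R ^ 2 - 8 * R * L + 2 * L ^ 2)
      * (2 * (R - L) * (R - L) - R * R) := by
  unfold Npoly; ring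

theorem Ppoly_self_add_Qpoly_self_mul :
    Ppoly L R R + Qpoly L R R * (R - L) ^ 4 =
      2 * L ^ 2 * (R - L) ^ 4 * (31 * R ^ 2 - 36 * R * L + 6 * L ^ 2)
        * (2 * (R - L) * (R - L) - R * R) := by
  unfold Ppoly Qpoly; ring

theorem Spoly_self :
    Spoly L R R = 2 * L * (R - L) ^ 2 * (27 * R ^ 2 - 40 * R * L + 10 * L ^ 2)
      * (2 * (R - L) * (R - L) - R * R) := by
  unfold Spoly; ring

end SymmetricTable

theorem tau2a_symmetric_specialization (L R K J : ℝ)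
    (hL : 0 < L) (hLR : L < R) (hres : 2 * (R - L) ^ 2 ≠ R ^ 2) :
    tau2a L R R K K J J =
      3 * (7 * R ^ 2 - 8 * R * L + 2 * L ^ 2)
        / (128 * R ^ 2 * (R - L) * Real.sqrt (L * (2 * R - L)))
      - L * (27 * R ^ 2 - 40 * R * L + 10 * L ^ 2) * K
        / (192 * R * (R - L) * (2 * R - L) * Real.sqrt (L * (2 * R - L)))
      + L ^ 2 * (31 * R ^ 2 - 36 * R * L + 6 * L ^ 2) * K ^ 2
        / (384 * (R - L) * (2 * R - L) ^ 2 * Real.sqrt (L * (2 * R - L)))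
      - L ^ 2 * R * J / (96 * (2 * R - L) * Real.sqrt (L * (2 * R - L))) := by
  have hR : R ≠ 0 := (hL.trans hLR).ne'
  have hRL : R - L ≠ 0 := (sub_pos.2 hLR).ne'
  have h2RL : 2 * R - L ≠ 0 := by linarith
  have hs : √(L * (2 * R - L)) ≠ 0 := (Real.sqrt_pos.2 (by nlinarith)).ne'
  have hΓ : 2 * (R - L) * (R - L) - R * R ≠ 0 := fun h => hres (by linear_combination h)
  unfold tau2a
  rw [sqrt_symmetric_discriminant L R hLR, Npoly_self, Spoly_self,
    eq_sub_of_add_eq (Ppoly_self_add_Qpoly_self_mul L R), Tpoly,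
    show R + R - L = 2 * R - L by ring]
  generalize 2 * (R - L) * (R - L) - R * R = Γ at hΓ ⊢
  field_simp
  ring
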